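/- arXiv:1205.2203 — 2 statements merged into one kernel-verified Lean document; each statement's English description precedes it below -/
import Mathlib

section
/- Let f_t(x,y) = x·y·(x+y-4)·(x-ty) for a parameter t ∈ ℂ. For t ∉ {-1, 0}, the critical points of f_t outside the zero fiber (i.e., points where ∇f_t = 0 and f_t ≠ 0) give exactly two critical values when t² + t + 1 ≠ 0, and exactly one critical value, equal to 3(t-1), when t² + t + 1 = 0. -/
/-- The family of polynomials `f_t(x,y) = x·y·(x+y-4)·(x-ty)`. -/
def fEx (t x y : ℂ) : ℂ := x * y * (x + y - 4) * (x - t * y)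

/-- The set of critical values of `f_t` outside the zero fiber. -/
def critValEx (t : ℂ) : Set ℂ :=
  {v : ℂ | v ≠ 0 ∧ ∃ x y : ℂ,
    deriv (fun u => fEx t u y) x = 0 ∧ deriv (fun u => fEx t x u) y = 0 ∧ fEx t x y = v}

/-! Off the zero fibre one may divide `∂ₓf_t` by `y` and `∂ᵧf_t` by `x`; eliminating shows that the
critical points are exactly the points `(x, 3 - x)` with `(1+t)x² - 2(1+2t)x + 3t = 0`. Modulo this
quadratic, `f_t(x, 3 - x)` reduces to the affine function `3(t-1) + (t²+t+1)(3-2x)/(1+t)` of `x`.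
The quadratic has discriminant `4(t²+t+1)`: if `t²+t+1 ≠ 0` it has two roots, which the injective
affine map sends to two critical values; otherwise that map is the constant `3(t-1)`. -/

theorem ncard_setOf_quadratic_eq_zero {K : Type*} [Field K] [IsAlgClosed K] [NeZero (2 : K)]
    {a b c : K} (ha : a ≠ 0) (hd : discrim a b c ≠ 0) :
    {x | a * (x * x) + b * x + c = 0}.ncard = 2 := by
  obtain ⟨s, hs⟩ := IsAlgClosed.exists_eq_mul_self (discrim a b c)
  have hs0 : s ≠ 0 := by rintro rfl; exact hd (by simpa using hs)
  have hroots : {x | a * (x * x) + b * x + c = 0} = {(-b + s) / (2 * a), (-b - s) / (2 * a)} :=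
    Set.ext (quadratic_eq_zero_iff ha hs)
  rw [hroots, Set.ncard_pair]
  intro h
  rw [div_left_inj' (mul_ne_zero two_ne_zero ha)] at h
  have h2s : 2 * s = 0 := by linear_combination h
  exact hs0 ((mul_eq_zero.mp h2s).resolve_left two_ne_zero)

theorem deriv_fEx_fst (t x y : ℂ) : deriv (fun u => fEx t u y) x
    = y * (x + y - 4) * (x - t * y) + x * y * (x - t * y) + x * y * (x + y - 4) := by
  have h : HasDerivAt (fun u => fEx t u y) _ x := (((hasDerivAt_id x).mul_const y).mul
    (((hasDerivAt_id x).add_const y).sub_const 4)).mul ((hasDerivAt_id x).sub_const (t * y))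
  rw [h.deriv]
  simp only [id, Pi.mul_apply]; ring

theorem deriv_fEx_snd (t x y : ℂ) : deriv (fun u => fEx t x u) y
    = x * (x + y - 4) * (x - t * y) + x * y * (x - t * y) - t * x * y * (x + y - 4) := by
  have h : HasDerivAt (fun u => fEx t x u) _ y := (((hasDerivAt_id y).const_mul x).mul
    (((hasDerivAt_id y).const_add x).sub_const 4)).mul (((hasDerivAt_id y).const_mul t).const_sub x)
  rw [h.deriv]
  simp only [id, Pi.mul_apply]; ring

theorem critical_equations_of_deriv_fEx_eq_zero {t x y : ℂ} (hf : fEx t x y ≠ 0)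
    (hdx : deriv (fun u => fEx t u y) x = 0) (hdy : deriv (fun u => fEx t x u) y = 0) :
    (1 + t) * x * y = x + t * y ∧ x ^ 2 + t * y ^ 2 = 2 * x + 2 * t * y := by
  rw [deriv_fEx_fst] at hdx
  rw [deriv_fEx_snd] at hdy
  obtain ⟨⟨⟨hx, hy⟩, -⟩, hM⟩ : ((x ≠ 0 ∧ y ≠ 0) ∧ x + y - 4 ≠ 0) ∧ x - t * y ≠ 0 := by
    simpa only [fEx, mul_ne_zero_iff] using hf
  have hGx : (x + y - 4) * (x - t * y) + x * (x - t * y) + x * (x + y - 4) = 0 := by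
    refine (mul_eq_zero.mp ?_).resolve_left hy
    linear_combination hdx
  have hGy : (x + y - 4) * (x - t * y) + y * (x - t * y) - t * y * (x + y - 4) = 0 := by
    refine (mul_eq_zero.mp ?_).resolve_left hx
    linear_combination hdy
  have hP : (x + y - 4) * (x + t * y) + (1 + t) * x * y = 0 := by
    refine (mul_eq_zero.mp ?_).resolve_left hM
    linear_combination t * y * hGx + x * hGy
  exact ⟨by linear_combination (1/2) * hP - (1/4) * (hGx - hGy),
    by linear_combination (1/2) * (hGx - hGy)⟩

theorem eq_three_sub_of_critical_equations {t x y : ℂ} (ht : 1 + t ≠ 0) (hx : x ≠ 0)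
    (hS : (1 + t) * x * y = x + t * y) (hI : x ^ 2 + t * y ^ 2 = 2 * x + 2 * t * y) :
    y = 3 - x ∧ (1 + t) * (x * x) + -2 * (1 + 2 * t) * x + 3 * t = 0 := by
  have hD : (1 + t) * x - t ≠ 0 := fun h => hx (by linear_combination y * h - hS)
  have hQ : (1 + t) * (x * x) + -2 * (1 + 2 * t) * x + 3 * t = 0 := by
    -- `hS` says `y = x / ((1 + t) * x - t)`; substituting this into `hI` gives `h`.
    have h : x ^ 2 * ((1 + t) * ((1 + t) * (x * x) + -2 * (1 + 2 * t) * x + 3 * t)) = 0 := by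
      linear_combination ((1 + t) * x - t) ^ 2 * hI
        - (t * (y * ((1 + t) * x - t) + x) - 2 * t * ((1 + t) * x - t)) * hS
    exact (mul_eq_zero.mp ((mul_eq_zero.mp h).resolve_left (pow_ne_zero 2 hx))).resolve_left ht
  refine ⟨?_, hQ⟩
  have h : (3 - x - y) * ((1 + t) * x - t) = 0 := by linear_combination -hQ - hS
  linear_combination -(mul_eq_zero.mp h).resolve_right hD

theorem deriv_fEx_eq_zero_iff {t x y : ℂ} (ht : 1 + t ≠ 0) (ht0 : t ≠ 0) :
    (deriv (fun u => fEx t u y) x = 0 ∧ deriv (fun u => fEx t x u) y = 0 ∧ fEx t x y ≠ 0) ↔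
      y = 3 - x ∧ (1 + t) * (x * x) + -2 * (1 + 2 * t) * x + 3 * t = 0 := by
  constructor
  · rintro ⟨hdx, hdy, hf⟩
    have hx : x ≠ 0 := by rintro rfl; simp [fEx] at hf
    obtain ⟨hS, hI⟩ := critical_equations_of_deriv_fEx_eq_zero hf hdx hdy
    exact eq_three_sub_of_critical_equations ht hx hS hI
  · rintro ⟨rfl, hQ⟩
    have hx : x ≠ 0 := by rintro rfl; exact ht0 (by linear_combination hQ / 3)
    have hx3 : 3 - x ≠ 0 := by
      intro h
      have h3 : (3 : ℂ) = 0 := by linear_combination hQ + ((1 + t) * x + 1 - t) * h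
      norm_num at h3
    have hM : x - t * (3 - x) ≠ 0 := by
      intro h; apply ht0
      linear_combination -(1/3) * (1 + t) * hQ + (1/3) * ((1 + t) * x - t - 2) * h
    have hL : x + (3 - x) - 4 ≠ 0 := by norm_num
    refine ⟨?_, ?_, mul_ne_zero (mul_ne_zero (mul_ne_zero hx hx3) hL) hM⟩
    · rw [deriv_fEx_fst]; linear_combination (3 - x) * hQ
    · rw [deriv_fEx_snd]; linear_combination (-x) * hQ

theorem fEx_three_sub_of_quadratic_eq_zero {t x : ℂ} (ht : 1 + t ≠ 0)
    (hQ : (1 + t) * (x * x) + -2 * (1 + 2 * t) * x + 3 * t = 0) :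
    fEx t x (3 - x) = 3 * (t - 1) + (t ^ 2 + t + 1) * (3 - 2 * x) / (1 + t) := by
  rw [add_div_eq_mul_add_div _ _ ht, eq_div_iff ht, fEx]
  linear_combination ((1 + t) * x - (1 + 2 * t)) * hQ

theorem critValEx_eq_image {t : ℂ} (ht : 1 + t ≠ 0) (ht0 : t ≠ 0) :
    critValEx t = (fun x => 3 * (t - 1) + (t ^ 2 + t + 1) * (3 - 2 * x) / (1 + t)) ''
      {x | (1 + t) * (x * x) + -2 * (1 + 2 * t) * x + 3 * t = 0} := by
  ext v
  constructor
  · rintro ⟨hv, x, y, hdx, hdy, rfl⟩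
    obtain ⟨rfl, hQ⟩ := (deriv_fEx_eq_zero_iff ht ht0).mp ⟨hdx, hdy, hv⟩
    exact ⟨x, hQ, (fEx_three_sub_of_quadratic_eq_zero ht hQ).symm⟩
  · rintro ⟨x, hQ, rfl⟩
    obtain ⟨hdx, hdy, hf⟩ := (deriv_fEx_eq_zero_iff ht ht0).mpr ⟨rfl, hQ⟩
    dsimp only
    rw [← fEx_three_sub_of_quadratic_eq_zero ht hQ]
    exact ⟨hf, x, 3 - x, hdx, hdy, rfl⟩

/-- For `t ∉ {-1, 0}`, the critical points of `f_t = xy(x+y-4)(x-ty)`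
outside the zero fiber give exactly two critical values when `t² + t + 1 ≠ 0`, and
exactly one critical value, equal to `3(t-1)`, when `t² + t + 1 = 0`. -/
theorem critical_values_of_example_family
    (t : ℂ) (ht1 : t ≠ -1) (ht0 : t ≠ 0) :
    (t ^ 2 + t + 1 ≠ 0 → (critValEx t).ncard = 2) ∧
    (t ^ 2 + t + 1 = 0 → critValEx t = {3 * (t - 1)}) := by
  have ht : 1 + t ≠ 0 := fun h => ht1 (by linear_combination h)
  have hdisc : discrim (1 + t) (-2 * (1 + 2 * t)) (3 * t) = 4 * (t ^ 2 + t + 1) := by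
    rw [discrim]; ring
  rw [critValEx_eq_image ht ht0]
  refine ⟨fun hc => ?_, fun hc => ?_⟩
  · have hinj : Function.Injective
        fun x : ℂ => 3 * (t - 1) + (t ^ 2 + t + 1) * (3 - 2 * x) / (1 + t) := fun x y h => by
      have h' := mul_left_cancel₀ hc ((div_left_inj' ht).mp (add_left_cancel h))
      linear_combination -h' / 2
    rw [Set.ncard_image_of_injective _ hinj]
    exact ncard_setOf_quadratic_eq_zero ht (by rw [hdisc]; exact mul_ne_zero (by norm_num) hc)
  · simp only [hc, zero_mul, zero_div, add_zero]
    obtain ⟨s, hs⟩ := IsAlgClosed.exists_eq_mul_self (discrim (1 + t) (-2 * (1 + 2 * t)) (3 * t))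
    exact Set.Nonempty.image_const (exists_quadratic_eq_zero ht ⟨s, hs⟩) _
end

section
/- Let g ∈ ℂ[x_1,...,x_p] be homogeneous of degree q ≥ 1 (regarded as a function depending only on the first p coordinates) and h a function with (∇h/h)(z_k) bounded, and let f = g·h. Suppose π(z_k) → 0 in ℂ^p, where π is the projection to the first p coordinates, while g(z_k) ≠ 0. Then ⟨π(∇g/g)(z_k), π(z_k)⟩ = q for all k, where ⟨π(∇g/g)(z), π(z)⟩ denotes the bilinear pairing Σ_i (∂g/∂x_i)(z)z_i / g(z); moreover ⟨π(∇h/h)(z_k), π(z_k)⟩ → 0, hence ⟨π(∇f/f)(z_k), π(z_k)⟩ → q, and consequently max_{i≤p} |(∂f/∂x_i / f)(z_k)| → ∞. -/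
open Filter MvPolynomial

lemma euler_monomial (p : ℕ) (d : Fin p →₀ ℕ) (c : ℂ) :
    ∑ i, pderiv i (monomial d c) * X i = (d.degree : ℂ) • monomial d c := by
  have : ∀ i : Fin p, pderiv i (monomial d c) * X i = (d i : ℂ) • monomial d c := by
    intro i
    rw [pderiv_monomial]
    by_cases h : d i = 0
    · simp [h]
    · rw [X, monomial_mul, mul_one]
      rw [tsub_add_cancel_of_le (Finsupp.single_le_iff.mpr (Nat.one_le_iff_ne_zero.mpr h))]
      simp [smul_monomial, mul_comm]
  simp_rw [this, ← Finset.sum_smul]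
  congr 1
  rw [show d.degree = ∑ i ∈ d.support, d i from rfl]
  rw [Finset.sum_subset (Finset.subset_univ d.support)]
  · push_cast; ring_nf
  · intro x _ hx
    simp [Finsupp.notMem_support_iff.mp hx]

lemma euler_eval (p q : ℕ) (g : MvPolynomial (Fin p) ℂ) (hg : g.IsHomogeneous q)
    (z : Fin p → ℂ) :
    ∑ i, eval z (pderiv i g) * z i = (q : ℂ) * eval z g := by
  have key : ∑ i, pderiv i g * X i = (q : ℂ) • g := by
    conv_lhs => rw [g.as_sum]
    simp_rw [map_sum, Finset.sum_mul]
    rw [Finset.sum_comm]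
    have : ∀ d ∈ g.support, ∑ i, pderiv i (monomial d (coeff d g)) * X i
        = (q : ℂ) • monomial d (coeff d g) := by
      intro d hd
      rw [euler_monomial]
      congr 2
      rw [Finsupp.degree_eq_weight_one]; exact hg (mem_support_iff.mp hd)
    rw [Finset.sum_congr rfl this, ← Finset.smul_sum, ← g.as_sum]
  have := congrArg (eval z) key
  simpa [eval_X] using this

/-- Let `g` be homogeneous of degree `q ≥ 1` in the first `p` coordinates,
`f = g·h` with `(∇h/h)(z_k)` bounded (recorded by the bounded sequence `w k` of its
first `p` components), and suppose `π(z_k) → 0` (recorded by the sequence `ζ k` of the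
first `p` coordinates of `z_k`) while `g(ζ_k) ≠ 0`. Then Euler's relation gives
`⟨π(∇g/g)(z_k), π(z_k)⟩ = q` for all `k`, `⟨π(∇h/h)(z_k), π(z_k)⟩ → 0`, and hence the
sup of the moduli of the first `p` components of `∇f/f` at `z_k`, namely
`max_{i ≤ p} |(∂_i g/g)(ζ_k) + w_k i|`, tends to infinity. -/
theorem first_coordinates_of_log_gradient_blow_up
    (p q : ℕ) (hq : 1 ≤ q) (g : MvPolynomial (Fin p) ℂ) (hg : g.IsHomogeneous q)
    (ζ : ℕ → Fin p → ℂ)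
    (hζ : Tendsto ζ atTop (nhds 0))
    (hg0 : ∀ k, eval (ζ k) g ≠ 0)
    (w : ℕ → Fin p → ℂ) (M : ℝ) (hw : ∀ k, ‖w k‖ ≤ M) :
    (∀ k, ∑ i, eval (ζ k) (pderiv i g) * ζ k i / eval (ζ k) g = (q : ℂ)) ∧
    Tendsto (fun k => ∑ i, w k i * ζ k i) atTop (nhds 0) ∧
    Tendsto (fun k => ⨆ i : Fin p,
        ‖eval (ζ k) (pderiv i g) / eval (ζ k) g + w k i‖) atTop atTop := by
  -- part 1: Euler relation
  have part1 : ∀ k, ∑ i, eval (ζ k) (pderiv i g) * ζ k i / eval (ζ k) g = (q : ℂ) := by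
    intro k
    rw [← Finset.sum_div, euler_eval p q g hg, mul_div_assoc,
      div_self (hg0 k), mul_one]
  -- ζ k never vanishes
  have hζne : ∀ k, ζ k ≠ 0 := by
    intro k hk
    apply hg0 k
    rw [hk]
    have h0 : coeff 0 g = 0 := by
      apply hg.coeff_eq_zero
      simp only [map_zero]
      omega
    rw [show (0 : Fin p → ℂ) = fun _ => (0:ℂ) from rfl]
    rw [eval_zero']
    simpa [constantCoeff] using h0
  have hζpos : ∀ k, 0 < ‖ζ k‖ := fun k => norm_pos_iff.mpr (hζne k)
  have hp : 0 < p := by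
    rcases Nat.eq_zero_or_pos p with h | h
    · exfalso; apply hζne 0; subst h; funext i; exact i.elim0
    · exact h
  have hζnorm : Tendsto (fun k => ‖ζ k‖) atTop (nhds 0) := by
    simpa using hζ.norm
  -- part 2
  have hbound : ∀ k, ‖∑ i, w k i * ζ k i‖ ≤ (p * M) * ‖ζ k‖ := by
    intro k
    calc ‖∑ i, w k i * ζ k i‖ ≤ ∑ i, ‖w k i * ζ k i‖ := norm_sum_le _ _
      _ ≤ ∑ _i : Fin p, M * ‖ζ k‖ := by
          apply Finset.sum_le_sum
          intro i _
          rw [norm_mul]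
          exact mul_le_mul ((norm_le_pi_norm (w k) i).trans (hw k))
            (norm_le_pi_norm (ζ k) i) (norm_nonneg _)
            (le_trans (norm_nonneg _) (hw k))
      _ = (p * M) * ‖ζ k‖ := by simp [Finset.sum_const, mul_assoc]
  have part2 : Tendsto (fun k => ∑ i, w k i * ζ k i) atTop (nhds 0) := by
    apply squeeze_zero_norm hbound
    have := hζnorm.const_mul (p * M)
    simpa using this
  refine ⟨part1, part2, ?_⟩
  -- part 3
  set S : ℕ → ℝ := fun k => ⨆ i : Fin p,
      ‖eval (ζ k) (pderiv i g) / eval (ζ k) g + w k i‖ with hS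
  set s : ℕ → ℂ := fun k => ∑ i, w k i * ζ k i with hs
  have hsum : ∀ k, ∑ i, (eval (ζ k) (pderiv i g) / eval (ζ k) g + w k i) * ζ k i
      = (q : ℂ) + s k := by
    intro k
    simp_rw [add_mul, Finset.sum_add_distrib]
    congr 1
    rw [← part1 k]
    apply Finset.sum_congr rfl
    intro i _
    ring
  have hSle : ∀ k, ‖(q : ℂ) + s k‖ ≤ S k * (p * ‖ζ k‖) := by
    intro k
    rw [← hsum k]
    have hbdd : BddAbove (Set.range fun i : Fin p =>
        ‖eval (ζ k) (pderiv i g) / eval (ζ k) g + w k i‖) :=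
      (Set.finite_range _).bddAbove
    calc ‖∑ i, (eval (ζ k) (pderiv i g) / eval (ζ k) g + w k i) * ζ k i‖
        ≤ ∑ i, ‖(eval (ζ k) (pderiv i g) / eval (ζ k) g + w k i) * ζ k i‖ :=
          norm_sum_le _ _
      _ ≤ ∑ _i : Fin p, S k * ‖ζ k‖ := by
          apply Finset.sum_le_sum
          intro i _
          rw [norm_mul]
          have h1 : ‖eval (ζ k) (pderiv i g) / eval (ζ k) g + w k i‖ ≤ S k :=
            le_ciSup hbdd i
          have h0 : (0:ℝ) ≤ S k := le_trans (norm_nonneg _) h1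
          exact mul_le_mul h1 (norm_le_pi_norm (ζ k) i) (norm_nonneg _) h0
      _ = S k * (p * ‖ζ k‖) := by simp [Finset.sum_const]; ring
  have hdenpos : ∀ k, 0 < p * ‖ζ k‖ := fun k =>
    mul_pos (by positivity) (hζpos k)
  have hBS : ∀ k, ‖(q : ℂ) + s k‖ * (p * ‖ζ k‖)⁻¹ ≤ S k := by
    intro k
    rw [← div_eq_mul_inv, div_le_iff₀ (hdenpos k)]
    exact hSle k
  apply tendsto_atTop_mono hBS
  have h1 : Tendsto (fun k => ‖(q : ℂ) + s k‖) atTop (nhds (q : ℝ)) := by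
    have : Tendsto (fun k => (q : ℂ) + s k) atTop (nhds ((q : ℂ) + 0)) :=
      tendsto_const_nhds.add part2
    have := this.norm
    simpa using this
  have h2 : Tendsto (fun k => ((p : ℝ) * ‖ζ k‖)⁻¹) atTop atTop := by
    apply Tendsto.inv_tendsto_nhdsGT_zero
    rw [tendsto_nhdsWithin_iff]
    constructor
    · have := hζnorm.const_mul (p : ℝ)
      simpa using this
    · exact Eventually.of_forall hdenpos
  exact Tendsto.pos_mul_atTop (by exact_mod_cast Nat.lt_of_lt_of_le Nat.zero_lt_one hq) h1 h2
end
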